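/- arXiv:2509.03252 — 4 statements merged into one kernel-verified Lean document; each statement's English description precedes it below -/
import Mathlib

section
/- Let U be an N×N unitary matrix, v a unit vector, a ∈ ℂ*, and A := I_N − (1 − a N^{-1/2}) v v*. For z in the open unit disk with z not an eigenvalue of U, z is an eigenvalue of U·A if and only if 1 − (1 − a N^{-1/2}) · v* (I_N − z U*)^{-1} v = 0. -/
/-!
Writing `M = 1 - z Uᴴ`, unitarity gives `U M = U - z` and hence `U A - z = U (M - c v v*)` with
`c = 1 - a/√N`. The rank-one update `M - c v v*` has determinant `det M · (1 - c v* M⁻¹ v)` by the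
matrix determinant lemma, and `det U · det M = det (U - z) ≠ 0`.
-/

open Matrix Metric

namespace Matrix

variable {m α : Type*} [Fintype m] [DecidableEq m] [CommRing α]

theorem det_sub_smul_vecMulVec {M : Matrix m m α} (hM : IsUnit M.det) (c : α) (u w : m → α) :
    (M - c • vecMulVec u w).det = M.det * (1 - c * (w ⬝ᵥ M⁻¹ *ᵥ u)) := by
  have hrank_one :
      M - c • vecMulVec u w = M + replicateCol Unit (-c • u) * replicateRow Unit w := by
    rw [replicateCol_smul, smul_mul, ← vecMulVec_eq, neg_smul, ← sub_eq_add_neg]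
  rw [hrank_one, det_add_replicateCol_mul_replicateRow hM, det_unique (n := Unit), add_apply,
    one_apply_eq, Matrix.mul_assoc, ← replicateCol_mulVec, replicateRow_mul_replicateCol_apply,
    mulVec_smul, dotProduct_smul, smul_eq_mul, neg_mul, ← sub_eq_add_neg]

theorem mul_one_sub_smul_of_mul_eq_one {U V : Matrix m m α} (hUV : U * V = 1) (z : α) :
    U * (1 - z • V) = U - z • 1 := by
  rw [Matrix.mul_sub, Matrix.mul_one, Matrix.mul_smul, hUV]

end Matrix

theorem stmt6_general (N : ℕ) (U : Matrix (Fin N) (Fin N) ℂ)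
    (hU : Uᴴ * U = 1)
    (v : Fin N → ℂ)
    (a : ℂ)
    (A : Matrix (Fin N) (Fin N) ℂ)
    (hA : A = 1 - (1 - a / (Real.sqrt N : ℂ)) • vecMulVec v (star v))
    (z : ℂ) (hznot : (U - z • 1).det ≠ 0) :
    (U * A - z • 1).det = 0 ↔
      1 - (1 - a / (Real.sqrt N : ℂ)) * (star v ⬝ᵥ ((1 - z • Uᴴ)⁻¹).mulVec v) = 0 := by
  set c : ℂ := 1 - a / (Real.sqrt N : ℂ)
  have hUM : U * (1 - z • Uᴴ) = U - z • 1 :=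
    mul_one_sub_smul_of_mul_eq_one (mul_eq_one_comm.mp hU) z
  have hM : IsUnit (1 - z • Uᴴ).det := by
    refine isUnit_iff_ne_zero.mpr (right_ne_zero_of_mul (a := U.det) ?_)
    rwa [← det_mul, hUM]
  have hfactor : U * A - z • 1 = U * (1 - z • Uᴴ - c • vecMulVec v (star v)) := by
    rw [hA, Matrix.mul_sub U (1 - z • Uᴴ), hUM, Matrix.mul_sub, Matrix.mul_one]
    abel
  rw [hfactor, det_mul, det_sub_smul_vecMulVec hM, ← mul_assoc, ← det_mul, hUM, mul_eq_zero,
    or_iff_right hznot]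

/-- For `|z| < 1` with `z` not an eigenvalue of `U`, `z` is an eigenvalue of `U·A`
(`A = I − (1 − a/√N) v v*`) iff `1 − (1 − a/√N)·v*(I − z U*)⁻¹ v = 0`. -/
theorem stmt6 (N : ℕ) (hN : 1 ≤ N) (U : Matrix (Fin N) (Fin N) ℂ)
    (hU : Uᴴ * U = 1)
    (v : Fin N → ℂ) (hv : star v ⬝ᵥ v = 1)
    (a : ℂ) (ha : a ≠ 0)
    (A : Matrix (Fin N) (Fin N) ℂ)
    (hA : A = 1 - (1 - a / (Real.sqrt N : ℂ)) • vecMulVec v (star v))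
    (z : ℂ) (hz : z ∈ ball (0 : ℂ) 1) (hznot : (U - z • 1).det ≠ 0) :
    (U * A - z • 1).det = 0 ↔
      1 - (1 - a / (Real.sqrt N : ℂ)) * (star v ⬝ᵥ ((1 - z • Uᴴ)⁻¹).mulVec v) = 0 :=
  stmt6_general N U hU v a A hA z hznot
end

section
/- Let U be an N×N unitary matrix, v a unit vector, a ∈ ℂ*, and A := I_N − (1 − a N^{-1/2}) v v*. For z in the open unit disk, z is an eigenvalue of U·A if and only if f_N(z) = 0, where f_N(z) := a − (√N − a) Σ_{k≥1} (v* (U*)^k v) z^k. Moreover f_N defines a holomorphic function on the open unit disk (the series converges absolutely for |z| < 1 since |v*(U*)^k v| ≤ 1). -/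
open Matrix Metric Finset Filter

lemma aux_dot_bound {N : ℕ} (x w : Fin N → ℂ) (M : Matrix (Fin N) (Fin N) ℂ) (c : ℝ)
    (hM : ∀ i j, ‖M i j‖ ≤ c) :
    ‖x ⬝ᵥ (M *ᵥ w)‖ ≤ (∑ i, ‖x i‖) * c * (∑ j, ‖w j‖) := by
  have hx : x ⬝ᵥ (M *ᵥ w) = ∑ i, x i * ∑ j, M i j * w j := by
    simp [dotProduct, Matrix.mulVec]
  rw [hx]
  have h1 : ‖∑ i, x i * ∑ j, M i j * w j‖ ≤ ∑ i, ‖x i‖ * (c * ∑ j, ‖w j‖) := by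
    refine (norm_sum_le _ _).trans (Finset.sum_le_sum fun i _ => ?_)
    rw [norm_mul]
    refine mul_le_mul_of_nonneg_left ?_ (norm_nonneg _)
    refine (norm_sum_le _ _).trans ?_
    rw [Finset.mul_sum]
    refine Finset.sum_le_sum fun j _ => ?_
    rw [norm_mul]
    exact mul_le_mul_of_nonneg_right (hM i j) (norm_nonneg _)
  calc ‖∑ i, x i * ∑ j, M i j * w j‖ ≤ ∑ i, ‖x i‖ * (c * ∑ j, ‖w j‖) := h1
    _ = (∑ i, ‖x i‖) * c * (∑ j, ‖w j‖) := by rw [← Finset.sum_mul]; ring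

lemma aux_unitary_entry {N : ℕ} (M : Matrix (Fin N) (Fin N) ℂ) (h : Mᴴ * M = 1) (i j : Fin N) :
    ‖M i j‖ ≤ 1 := by
  have h1 : (Mᴴ * M) j j = 1 := by rw [h]; simp
  have h2 : ∑ l, Complex.normSq (M l j) = 1 := by
    rw [Matrix.mul_apply] at h1
    simp only [Matrix.conjTranspose_apply] at h1
    have h3 : ((∑ l, Complex.normSq (M l j) : ℝ) : ℂ) = 1 := by
      push_cast
      rw [← h1]
      exact Finset.sum_congr rfl fun l _ => by
        rw [Complex.normSq_eq_conj_mul_self]; rfl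
    exact_mod_cast h3
  have h3 : Complex.normSq (M i j) ≤ 1 := by
    rw [← h2]
    exact Finset.single_le_sum (f := fun l => Complex.normSq (M l j))
      (fun l _ => Complex.normSq_nonneg _) (Finset.mem_univ i)
  nlinarith [Complex.sq_norm (M i j), norm_nonneg (M i j)]

lemma aux_pow_unitary {N : ℕ} (U : Matrix (Fin N) (Fin N) ℂ) (hU : Uᴴ * U = 1) (n : ℕ) :
    (Uᴴ ^ n)ᴴ * (Uᴴ ^ n) = 1 := by
  have hU' : U * Uᴴ = 1 := mul_eq_one_comm.mp hU
  rw [Matrix.conjTranspose_pow, Matrix.conjTranspose_conjTranspose]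
  induction n with
  | zero => simp
  | succ n ih =>
    rw [pow_succ, pow_succ']
    calc (U ^ n * U) * (Uᴴ * Uᴴ ^ n) = U ^ n * (U * Uᴴ) * Uᴴ ^ n := by noncomm_ring
      _ = 1 := by rw [hU', mul_one, ih]

lemma aux_sum_mulVec {N : ℕ} (s : Finset ℕ) (M : ℕ → Matrix (Fin N) (Fin N) ℂ) (v : Fin N → ℂ) :
    (∑ k ∈ s, M k) *ᵥ v = ∑ k ∈ s, (M k *ᵥ v) := by
  ext i
  simp only [Matrix.mulVec, dotProduct, Finset.sum_apply, Matrix.sum_apply,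
    Finset.sum_mul]
  rw [Finset.sum_comm]

lemma aux_dot_sum {N : ℕ} (s : Finset ℕ) (x : Fin N → ℂ) (y : ℕ → Fin N → ℂ) :
    x ⬝ᵥ (∑ k ∈ s, y k) = ∑ k ∈ s, x ⬝ᵥ y k := by
  simp only [dotProduct, Finset.sum_apply, Finset.mul_sum]
  rw [Finset.sum_comm]

lemma aux_det_ne {N : ℕ} (U : Matrix (Fin N) (Fin N) ℂ) (hU : Uᴴ * U = 1) (z : ℂ)
    (hz : ‖z‖ < 1) : (U - z • (1 : Matrix (Fin N) (Fin N) ℂ)).det ≠ 0 := by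
  intro hdet
  obtain ⟨w, hw0, hw⟩ := (Matrix.exists_mulVec_eq_zero_iff).mpr hdet
  have hUw : U *ᵥ w = z • w := by
    rw [Matrix.sub_mulVec, Matrix.smul_mulVec, Matrix.one_mulVec, sub_eq_zero] at hw
    exact hw
  have hnorm : star (U *ᵥ w) ⬝ᵥ (U *ᵥ w) = star w ⬝ᵥ w := by
    rw [Matrix.star_mulVec, Matrix.dotProduct_mulVec, Matrix.vecMul_vecMul, hU,
      Matrix.vecMul_one]
  have hL : star (z • w) ⬝ᵥ (z • w) = (star z * z) * (star w ⬝ᵥ w) := by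
    rw [star_smul, smul_dotProduct, dotProduct_smul, smul_eq_mul, smul_eq_mul]
    ring
  rw [hUw, hL] at hnorm
  have hww : star w ⬝ᵥ w ≠ 0 := by
    obtain ⟨i, hi⟩ := Function.ne_iff.mp hw0
    have hre : ∑ l, Complex.normSq (w l) > 0 :=
      Finset.sum_pos' (fun l _ => Complex.normSq_nonneg _)
        ⟨i, Finset.mem_univ i, Complex.normSq_pos.mpr hi⟩
    have heq : star w ⬝ᵥ w = ((∑ l, Complex.normSq (w l) : ℝ) : ℂ) := by
      push_cast
      simp only [dotProduct, Pi.star_apply]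
      exact Finset.sum_congr rfl fun l _ => by
        rw [Complex.normSq_eq_conj_mul_self]; rfl
    rw [heq]
    exact_mod_cast ne_of_gt hre
  have h1 : star z * z = 1 := mul_right_cancel₀ hww (by rw [hnorm, one_mul])
  have h2 : Complex.normSq z = 1 := by
    have h3 : ((Complex.normSq z : ℝ) : ℂ) = 1 := by
      rw [← h1, Complex.normSq_eq_conj_mul_self]; rfl
    exact_mod_cast h3
  nlinarith [Complex.sq_norm z, norm_nonneg z]

lemma aux_series {N : ℕ} (U : Matrix (Fin N) (Fin N) ℂ) (hU : Uᴴ * U = 1)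
    (v : Fin N → ℂ) (z : ℂ) (hz : ‖z‖ < 1)
    (hG : IsUnit (1 - z • Uᴴ : Matrix (Fin N) (Fin N) ℂ).det) :
    HasSum (fun k : ℕ => (star v ⬝ᵥ ((Uᴴ ^ k) *ᵥ v)) * z ^ k)
      (star v ⬝ᵥ ((1 - z • Uᴴ : Matrix (Fin N) (Fin N) ℂ)⁻¹ *ᵥ v)) := by
  set G : Matrix (Fin N) (Fin N) ℂ := 1 - z • Uᴴ with hGdef
  set f : ℕ → ℂ := fun k => (star v ⬝ᵥ ((Uᴴ ^ k) *ᵥ v)) * z ^ k with hf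
  set t : ℂ := star v ⬝ᵥ (G⁻¹ *ᵥ v) with htdef
  have hGinv : G⁻¹ * G = 1 := Matrix.nonsing_inv_mul G hG
  have key : ∀ n : ℕ, G⁻¹ = (∑ k ∈ range n, (z • Uᴴ) ^ k) + G⁻¹ * (z • Uᴴ) ^ n := by
    intro n
    have hgs : G * (∑ k ∈ range n, (z • Uᴴ) ^ k) = 1 - (z • Uᴴ) ^ n := by
      have h := mul_geom_sum (z • Uᴴ) n
      have hGneg : G = -((z • Uᴴ) - 1) := by rw [hGdef, neg_sub]
      rw [hGneg, neg_mul, h, neg_sub]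
    calc G⁻¹ = G⁻¹ * ((G * (∑ k ∈ range n, (z • Uᴴ) ^ k)) + (z • Uᴴ) ^ n) := by
          rw [hgs]; simp
      _ = (G⁻¹ * G) * (∑ k ∈ range n, (z • Uᴴ) ^ k) + G⁻¹ * (z • Uᴴ) ^ n := by noncomm_ring
      _ = (∑ k ∈ range n, (z • Uᴴ) ^ k) + G⁻¹ * (z • Uᴴ) ^ n := by rw [hGinv, one_mul]
  have partial_eq : ∀ n : ℕ,
      ∑ k ∈ range n, f k = t - z ^ n * (star v ⬝ᵥ ((G⁻¹ * Uᴴ ^ n) *ᵥ v)) := by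
    intro n
    have h1 : t = (∑ k ∈ range n, f k) + z ^ n * (star v ⬝ᵥ ((G⁻¹ * Uᴴ ^ n) *ᵥ v)) := by
      rw [htdef]
      conv_lhs => rw [key n]
      rw [Matrix.add_mulVec, dotProduct_add, aux_sum_mulVec, aux_dot_sum]
      congr 1
      · refine Finset.sum_congr rfl fun k _ => ?_
        rw [smul_pow, Matrix.smul_mulVec, dotProduct_smul, smul_eq_mul, hf]
        ring
      · rw [smul_pow, Matrix.mul_smul, Matrix.smul_mulVec, dotProduct_smul,
          smul_eq_mul]
    rw [h1]; ring
  set K : ℝ := (∑ i, ‖v i‖) * (∑ i, ∑ l, ‖G⁻¹ i l‖) * (∑ j, ‖v j‖) with hK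
  have hrem_bound : ∀ n : ℕ, ‖star v ⬝ᵥ ((G⁻¹ * Uᴴ ^ n) *ᵥ v)‖ ≤ K := by
    intro n
    have hentry : ∀ i j, ‖(G⁻¹ * Uᴴ ^ n) i j‖ ≤ ∑ i', ∑ l, ‖G⁻¹ i' l‖ := by
      intro i j
      rw [Matrix.mul_apply]
      refine (norm_sum_le _ _).trans ?_
      have h1 : ∑ l, ‖G⁻¹ i l * (Uᴴ ^ n) l j‖ ≤ ∑ l, ‖G⁻¹ i l‖ := by
        refine Finset.sum_le_sum fun l _ => ?_
        rw [norm_mul]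
        calc ‖G⁻¹ i l‖ * ‖(Uᴴ ^ n) l j‖ ≤ ‖G⁻¹ i l‖ * 1 :=
              mul_le_mul_of_nonneg_left
                (aux_unitary_entry _ (aux_pow_unitary U hU n) l j) (norm_nonneg _)
          _ = ‖G⁻¹ i l‖ := mul_one _
      refine h1.trans ?_
      exact Finset.single_le_sum (f := fun i' => ∑ l, ‖G⁻¹ i' l‖)
        (fun i' _ => Finset.sum_nonneg fun l _ => norm_nonneg _) (Finset.mem_univ i)
    have := aux_dot_bound (star v) v (G⁻¹ * Uᴴ ^ n) _ hentry
    convert this using 3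
    simp
  have hrem : Tendsto (fun n => z ^ n * (star v ⬝ᵥ ((G⁻¹ * Uᴴ ^ n) *ᵥ v))) atTop (nhds 0) := by
    refine squeeze_zero_norm (a := fun n => ‖z‖ ^ n * K) (fun n => ?_) ?_
    · rw [norm_mul, norm_pow]
      exact mul_le_mul_of_nonneg_left (hrem_bound n) (pow_nonneg (norm_nonneg _) _)
    · have h0 : Tendsto (fun n : ℕ => ‖z‖ ^ n) atTop (nhds 0) :=
        tendsto_pow_atTop_nhds_zero_of_lt_one (norm_nonneg z) hz
      simpa using h0.mul_const K
  have hpart : Tendsto (fun n => ∑ k ∈ range n, f k) atTop (nhds t) := by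
    simp only [partial_eq]
    have := tendsto_const_nhds (x := t) (f := atTop (α := ℕ)) |>.sub hrem
    simpa using this
  have hsum : Summable f := by
    refine Summable.of_norm_bounded (g := fun n => ((∑ i, ‖v i‖) * 1 * (∑ j, ‖v j‖)) * ‖z‖ ^ n)
      (Summable.mul_left _ (summable_geometric_of_lt_one (norm_nonneg z) hz)) (fun n => ?_)
    rw [hf]
    simp only [norm_mul, norm_pow]
    refine mul_le_mul_of_nonneg_right ?_ (pow_nonneg (norm_nonneg _) _)
    exact aux_dot_bound (star v) v (Uᴴ ^ n) 1
      (fun i j => aux_unitary_entry _ (aux_pow_unitary U hU n) i j) |>.trans (by simp)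
  have hts : ∑' k, f k = t :=
    tendsto_nhds_unique hsum.hasSum.tendsto_sum_nat hpart
  exact hts ▸ hsum.hasSum

lemma aux_mul_vecMulVec {N : ℕ} (U : Matrix (Fin N) (Fin N) ℂ) (v w : Fin N → ℂ) :
    U * vecMulVec v w = vecMulVec (U *ᵥ v) w := by
  ext i j
  simp [Matrix.mul_apply, Matrix.vecMulVec_apply, Matrix.mulVec, dotProduct,
    Finset.sum_mul, mul_assoc]

lemma aux_smul_vecMulVec {N : ℕ} (c : ℂ) (x w : Fin N → ℂ) :
    c • vecMulVec x w = vecMulVec (c • x) w := by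
  ext i j
  simp [Matrix.vecMulVec_apply, mul_assoc]

/-- The eigenvalues of `U·A` in the open unit disk are exactly the zeros there of
`f_N(z) = a − (√N − a) Σ_{k≥1} (v*(U*)^k v) z^k`, and `f_N` is holomorphic on the disk. -/
theorem stmt7 (N : ℕ) (hN : 1 ≤ N) (U : Matrix (Fin N) (Fin N) ℂ)
    (hU : Uᴴ * U = 1)
    (v : Fin N → ℂ) (hv : star v ⬝ᵥ v = 1)
    (a : ℂ) (ha : a ≠ 0)
    (A : Matrix (Fin N) (Fin N) ℂ)
    (hA : A = 1 - (1 - a / (Real.sqrt N : ℂ)) • vecMulVec v (star v))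
    (fN : ℂ → ℂ)
    (hfN : ∀ z : ℂ, fN z =
      a - ((Real.sqrt N : ℂ) - a) *
        ∑' k : ℕ, (star v ⬝ᵥ ((Uᴴ ^ (k + 1)).mulVec v)) * z ^ (k + 1)) :
    DifferentiableOn ℂ fN (ball (0 : ℂ) 1) ∧
      ∀ z ∈ ball (0 : ℂ) 1, ((U * A - z • 1).det = 0 ↔ fN z = 0) := by
  have hU' : U * Uᴴ = 1 := mul_eq_one_comm.mp hU
  have hdetU : IsUnit U.det := by
    have h1 : Uᴴ.det * U.det = 1 := by rw [← Matrix.det_mul, hU, Matrix.det_one]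
    exact IsUnit.of_mul_eq_one _ (by rw [mul_comm]; exact h1)
  set s : ℂ := (Real.sqrt N : ℂ) with hsdef
  have hs : s ≠ 0 := by
    rw [hsdef]
    refine Complex.ofReal_ne_zero.mpr (ne_of_gt (Real.sqrt_pos.mpr ?_))
    exact_mod_cast Nat.lt_of_lt_of_le Nat.zero_lt_one hN
  -- the coefficient function and its bound
  set c : ℕ → ℂ := fun k => star v ⬝ᵥ ((Uᴴ ^ k) *ᵥ v) with hc
  set C' : ℝ := (∑ i, ‖(star v) i‖) * 1 * (∑ j, ‖v j‖) with hC'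
  have hck : ∀ k, ‖c k‖ ≤ C' := fun k =>
    aux_dot_bound (star v) v (Uᴴ ^ k) 1
      (fun i j => aux_unitary_entry _ (aux_pow_unitary U hU k) i j)
  have hC'0 : 0 ≤ C' := le_trans (norm_nonneg _) (hck 0)
  -- rewriting the tail series
  have hS_eq : ∀ y : ℂ,
      (∑' k : ℕ, (star v ⬝ᵥ ((Uᴴ ^ (k + 1)).mulVec v)) * y ^ (k + 1))
        = ∑' k : ℕ, c (k + 1) * y ^ (k + 1) := fun y => tsum_congr fun k => by rw [hc]
  -- the power-series coefficients of fN
  set b : ℕ → ℂ := fun n => if n = 0 then a else -(s - a) * c n with hb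
  set K : ℝ := max ‖a‖ (‖s - a‖ * C') with hKdef
  have hbK : ∀ n, ‖b n‖ ≤ K := by
    intro n
    rw [hb]
    by_cases h : n = 0
    · simp [h, hKdef]
    · simp only [h, if_false]
      rw [norm_mul, norm_neg]
      refine le_trans ?_ (le_max_right _ _)
      exact mul_le_mul_of_nonneg_left (hck n) (norm_nonneg _)
  -- HasSum of the series at each point of the ball
  have hHS : ∀ y : ℂ, ‖y‖ < 1 → HasSum (fun n => b n * y ^ n) (fN y) := by
    intro y hy
    have hsummy : Summable (fun n => b n * y ^ n) := by
      refine Summable.of_norm_bounded (g := fun n => K * ‖y‖ ^ n)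
        (Summable.mul_left _ (summable_geometric_of_lt_one (norm_nonneg y) hy)) (fun n => ?_)
      rw [norm_mul, norm_pow]
      exact mul_le_mul_of_nonneg_right (hbK n) (pow_nonneg (norm_nonneg _) _)
    have htsum : ∑' n, b n * y ^ n = fN y := by
      rw [hsummy.tsum_eq_zero_add]
      have hb0 : b 0 * y ^ 0 = a := by simp [hb]
      have hbt : ∑' n : ℕ, b (n + 1) * y ^ (n + 1)
          = -(s - a) * ∑' n : ℕ, c (n + 1) * y ^ (n + 1) := by
        rw [← tsum_mul_left]
        exact tsum_congr fun n => by rw [hb]; simp [mul_assoc]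
      rw [hb0, hbt, hfN y, hS_eq y]
      ring
    exact htsum ▸ hsummy.hasSum
  constructor
  · -- differentiability
    set p : FormalMultilinearSeries ℂ ℂ ℂ :=
      fun n => b n • ContinuousMultilinearMap.mkPiAlgebraFin ℂ n ℂ with hp
    have hpn : ∀ n, ‖p n‖ ≤ K := by
      intro n
      show ‖b n • ContinuousMultilinearMap.mkPiAlgebraFin ℂ n ℂ‖ ≤ K
      refine (norm_smul_le (b n) (ContinuousMultilinearMap.mkPiAlgebraFin ℂ n ℂ)).trans ?_
      rw [ContinuousMultilinearMap.norm_mkPiAlgebraFin, mul_one]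
      exact hbK n
    have hrad : (1 : ENNReal) ≤ p.radius := by
      have := p.le_radius_of_bound K (r := 1) (fun n => by
        rw [NNReal.coe_one, one_pow, mul_one]; exact hpn n)
      simpa using this
    have hps : HasFPowerSeriesOnBall fN p 0 1 := by
      refine ⟨hrad, zero_lt_one, ?_⟩
      intro y hy
      have hy1 : ‖y‖ < 1 := by
        rw [mem_emetric_ball_zero_iff] at hy
        exact_mod_cast (show (‖y‖₊ : ENNReal) < 1 from hy)
      have happ : (fun n => p n fun _ => y) = fun n => b n * y ^ n := by
        funext n
        rw [hp]
        simp [ContinuousMultilinearMap.mkPiAlgebraFin_apply, List.prod_ofFn, smul_eq_mul]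
      rw [happ, zero_add]
      exact hHS y hy1
    have hdiff := hps.differentiableOn
    have hball : Metric.eball (0 : ℂ) 1 = Metric.ball (0 : ℂ) 1 := by
      rw [show (1 : ENNReal) = ((1 : NNReal) : ENNReal) from ENNReal.coe_one.symm,
        Metric.eball_coe, NNReal.coe_one]
    rwa [hball] at hdiff
  · -- eigenvalue characterization
    intro z hz
    rw [mem_ball_zero_iff] at hz
    have hdetB : (U - z • (1 : Matrix (Fin N) (Fin N) ℂ)).det ≠ 0 := aux_det_ne U hU z hz
    have hdetBu : IsUnit (U - z • (1 : Matrix (Fin N) (Fin N) ℂ)).det :=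
      isUnit_iff_ne_zero.mpr hdetB
    set B : Matrix (Fin N) (Fin N) ℂ := U - z • 1 with hB
    set G : Matrix (Fin N) (Fin N) ℂ := 1 - z • Uᴴ with hG
    have hfact : U * G = B := by
      rw [hG, hB, mul_sub, mul_one, Matrix.mul_smul, hU']
    have hdetG : IsUnit G.det := by
      refine isUnit_iff_ne_zero.mpr fun h0 => hdetB ?_
      rw [← hfact, Matrix.det_mul, h0, mul_zero]
    have hBinvU : B⁻¹ * U = G⁻¹ := by
      rw [← hfact, Matrix.mul_inv_rev, mul_assoc, Matrix.nonsing_inv_mul U hdetU, mul_one]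
    set t : ℂ := star v ⬝ᵥ (G⁻¹ *ᵥ v) with ht
    have hHSz := aux_series U hU v z hz hdetG
    -- t = 1 + S
    have hc0 : c 0 * z ^ 0 = 1 := by rw [hc]; simp [hv]
    have ht1S : t = 1 + ∑' k : ℕ, c (k + 1) * z ^ (k + 1) := by
      have h1 : t = ∑' k : ℕ, c k * z ^ k := hHSz.tsum_eq.symm
      rw [h1, hHSz.summable.tsum_eq_zero_add, hc0]
    -- the factorization
    set u : Fin N → ℂ := B⁻¹ *ᵥ (U *ᵥ v) with hu
    have hBu : B *ᵥ u = U *ᵥ v := by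
      rw [hu, Matrix.mulVec_mulVec, Matrix.mul_nonsing_inv B hdetBu, Matrix.one_mulVec]
    have hUA : U * A - z • 1 = B - (1 - a / s) • vecMulVec (U *ᵥ v) (star v) := by
      rw [hA, mul_sub, mul_one, Matrix.mul_smul, aux_mul_vecMulVec, hB]
      abel
    have hfact2 : U * A - z • 1 = B * (1 + vecMulVec ((-(1 - a / s)) • u) (star v)) := by
      have hR : B * (1 + vecMulVec ((-(1 - a / s)) • u) (star v))
          = B - (1 - a / s) • vecMulVec (U *ᵥ v) (star v) :=
        calc B * (1 + vecMulVec ((-(1 - a / s)) • u) (star v))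
            = B + B * vecMulVec ((-(1 - a / s)) • u) (star v) := by rw [mul_add, mul_one]
          _ = B + vecMulVec (B *ᵥ ((-(1 - a / s)) • u)) (star v) := by rw [aux_mul_vecMulVec]
          _ = B + vecMulVec ((-(1 - a / s)) • (U *ᵥ v)) (star v) := by
              rw [Matrix.mulVec_smul, hBu]
          _ = B - (1 - a / s) • vecMulVec (U *ᵥ v) (star v) := by
              rw [← aux_smul_vecMulVec, neg_smul]; abel
      rw [hUA, hR]
    have hdotu : star v ⬝ᵥ u = t := by
      rw [hu, Matrix.mulVec_mulVec, hBinvU, ht]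
    have hdet_eq : (U * A - z • 1).det = B.det * (1 + -(1 - a / s) * t) := by
      rw [hfact2, Matrix.det_mul, Matrix.vecMulVec_eq (Fin 1),
        Matrix.det_one_add_replicateCol_mul_replicateRow, dotProduct_smul, smul_eq_mul, hdotu]
    have hfNz : fN z = s * (1 + -(1 - a / s) * t) := by
      rw [hfN z, hS_eq z, ht1S]
      field_simp
      ring
    rw [hdet_eq, hfNz]
    constructor
    · intro h
      rcases mul_eq_zero.mp h with h | h
      · exact absurd h hdetB
      · rw [h, mul_zero]
    · intro h
      rcases mul_eq_zero.mp h with h | h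
      · exact absurd h hs
      · rw [h, mul_zero]
end

section
/- Let f_n and f be holomorphic on the unit disk 𝔻, and suppose f_n → f uniformly on compact subsets of 𝔻, where f is not identically zero. Then for every continuous compactly supported φ : 𝔻 → ℂ, the sum of φ over the zeros of f_n (with multiplicity) converges to the sum of φ over the zeros of f (with multiplicity). Equivalently, the map F : H(𝔻)∖{0} → Q sending f to its zero counting measure is continuous from the compact-open topology to the vague topology. -/
open Metric Filter

section ZCHelpers
open Set circleIntegral

/-- Local structure of zeros: from a factorization `h w = (w-z)^d * g w` with `g z ≠ 0`. -/
lemma zc_loc {h g : ℂ → ℂ} {z : ℂ} {d : ℕ} (hg : AnalyticAt ℂ g z) (hgz : g z ≠ 0)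
    (hev : ∀ᶠ w in nhds z, h w = (w - z) ^ d * g w) :
    (∀ᶠ w in nhdsWithin z {z}ᶜ, h w ≠ 0) ∧ (h z = 0 ↔ d ≠ 0) := by
  have hgne : ∀ᶠ w in nhds z, g w ≠ 0 := hg.continuousAt.eventually_ne hgz
  constructor
  · have h2 : ∀ᶠ w in nhdsWithin z {z}ᶜ, h w = (w - z) ^ d * g w ∧ g w ≠ 0 :=
      (hev.and hgne).filter_mono nhdsWithin_le_nhds
    refine h2.mp (eventually_mem_nhdsWithin.mono ?_)
    intro w hw ⟨h1, h2⟩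
    rw [h1]
    exact mul_ne_zero (pow_ne_zero _ (sub_ne_zero.mpr hw)) h2
  · have h0 : h z = (z - z) ^ d * g z := hev.self_of_nhds
    rw [h0, sub_self]
    rcases Nat.eq_zero_or_pos d with hd | hd
    · simp [hd, hgz]
    · simp [zero_pow hd.ne', hd.ne']

/-- Zeros of a function with isolated zeros are finite in a compact set. -/
lemma zc_finite {h : ℂ → ℂ} {K : Set ℂ}
    (hiso : ∀ z ∈ K, ∀ᶠ w in nhdsWithin z {z}ᶜ, h w ≠ 0)
    (hK : IsCompact K) : {z | z ∈ K ∧ h z = 0}.Finite := by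
  have hU : ∀ z ∈ K, {w : ℂ | w ≠ z → h w ≠ 0} ∈ nhds z := by
    intro z hz
    have := hiso z hz
    rwa [eventually_nhdsWithin_iff] at this
  obtain ⟨t, hcov⟩ := hK.elim_nhds_subcover' (fun z hz => {w : ℂ | w ≠ z → h w ≠ 0}) hU
  refine Set.Finite.subset (t.finite_toSet.image Subtype.val) ?_
  rintro z ⟨hzK, hz0⟩
  obtain ⟨x, hxt, hx⟩ := Set.mem_iUnion₂.mp (hcov hzK)
  have : z = x.1 := by
    by_contra hne
    exact hx hne hz0
  exact ⟨x, hxt, this.symm⟩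

lemma zc_integral_add {f g : ℂ → ℂ} {c : ℂ} {R : ℝ} (hf : CircleIntegrable f c R)
    (hg : CircleIntegrable g c R) :
    (∮ z in C(c, R), (f z + g z)) = (∮ z in C(c, R), f z) + ∮ z in C(c, R), g z := by
  simp only [circleIntegral, smul_add, intervalIntegral.integral_add hf.out hg.out]

lemma zc_AP (z0 : ℂ) (r : ℝ) (hr : 0 < r) (hsub : closedBall z0 r ⊆ ball (0:ℂ) 1) :
    ∀ (n : ℕ) (S : Finset ℂ) (h : ℂ → ℂ) (d : ℂ → ℕ),
      S.card = n →
      DifferentiableOn ℂ h (ball (0:ℂ) 1) →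
      (∀ z ∈ ball (0:ℂ) 1, ∃ g : ℂ → ℂ, AnalyticAt ℂ g z ∧ g z ≠ 0 ∧
        ∀ᶠ w in nhds z, h w = (w - z) ^ (d z) * g w) →
      (∀ z ∈ sphere z0 r, h z ≠ 0) →
      (↑S = {z | z ∈ closedBall z0 r ∧ h z = 0}) →
      (∮ z in C(z0, r), deriv h z / h z) = 2 * Real.pi * Complex.I * (∑ z ∈ S, (d z : ℂ)) := by
  intro n
  induction n with
  | zero =>
    intro S h d hcard hdiff hfac hsph hS
    have hSempty : S = ∅ := Finset.card_eq_zero.mp hcard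
    subst hSempty
    have hne : ∀ z ∈ closedBall z0 r, h z ≠ 0 := by
      intro z hz hz0
      have hmem : z ∈ (↑(∅ : Finset ℂ) : Set ℂ) := by
        rw [hS]; exact ⟨hz, hz0⟩
      simp at hmem
    have han : AnalyticOnNhd ℂ h (ball (0:ℂ) 1) :=
      (Complex.analyticOnNhd_iff_differentiableOn isOpen_ball).mpr hdiff
    have hdz : AnalyticOnNhd ℂ (deriv h) (ball (0:ℂ) 1) := han.deriv
    have hzero : (∮ z in C(z0, r), deriv h z / h z) = 0 := by
      apply Complex.circleIntegral_eq_zero_of_differentiable_on_off_countable hr.le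
        Set.countable_empty
      · exact ((hdz.continuousOn.mono hsub).div ((hdiff.continuousOn).mono hsub) hne)
      · rintro z ⟨hz, -⟩
        have hz1 : z ∈ ball (0:ℂ) 1 := hsub (ball_subset_closedBall hz)
        exact ((hdz z hz1).differentiableAt).div ((han z hz1).differentiableAt)
          (hne z (ball_subset_closedBall hz))
    simp [hzero]
  | succ n ih =>
    intro S h d hcard hdiff hfac hsph hS
    -- pick a zero z1
    have hScard : 0 < S.card := by omega
    obtain ⟨z1, h1S⟩ := Finset.card_pos.mp hScard
    have h1 : z1 ∈ closedBall z0 r ∧ h z1 = 0 := by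
      rw [← Set.mem_setOf_eq (p := fun z => z ∈ closedBall z0 r ∧ h z = 0), ← hS]
      exact_mod_cast h1S
    have hz1b : z1 ∈ ball (0:ℂ) 1 := hsub h1.1
    obtain ⟨g1, hg1a, hg1z, hg1ev⟩ := hfac z1 hz1b
    have hd1 : d z1 ≠ 0 := by
      intro h0
      have := hg1ev.self_of_nhds
      rw [h0, pow_zero, one_mul, h1.2] at this
      exact hg1z this.symm
    have hz1ball : z1 ∈ ball z0 r := by
      rcases lt_or_eq_of_le (mem_closedBall.mp h1.1) with hlt | heq
      · exact mem_ball.mpr hlt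
      · exact absurd (hsph z1 (mem_sphere.mpr heq)) (not_not.mpr h1.2)
    set G : ℂ → ℂ := Function.update (fun w => h w / (w - z1) ^ (d z1)) z1 (g1 z1) with hGdef
    have hG1 : ∀ w, w ≠ z1 → G w = h w / (w - z1) ^ (d z1) := by
      intro w hw
      simp [hGdef, Function.update_of_ne hw]
    have hGz1 : G z1 = g1 z1 := Function.update_self _ _ _
    have hGfac : ∀ w, h w = (w - z1) ^ (d z1) * G w := by
      intro w
      by_cases hw : w = z1
      · subst hw
        simp [h1.2, zero_pow hd1]
      · have hne : (w - z1) ^ (d z1) ≠ 0 := pow_ne_zero _ (sub_ne_zero.mpr hw)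
        rw [hG1 w hw, mul_comm, div_mul_cancel₀ _ hne]
    have hGev : G =ᶠ[nhds z1] g1 := by
      filter_upwards [hg1ev] with w hw
      by_cases hwz : w = z1
      · subst hwz; rw [hGz1]
      · rw [hG1 w hwz, hw, mul_comm, mul_div_assoc,
          div_self (pow_ne_zero _ (sub_ne_zero.mpr hwz)), mul_one]
    have hGan1 : AnalyticAt ℂ G z1 := hg1a.congr hGev.symm
    have hGdiff : DifferentiableOn ℂ G (ball (0:ℂ) 1) := by
      intro w hw
      by_cases hwz : w = z1
      · subst hwz
        exact hGan1.differentiableAt.differentiableWithinAt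
      · apply DifferentiableAt.differentiableWithinAt
        have hq : DifferentiableAt ℂ (fun w => h w / (w - z1) ^ (d z1)) w :=
          (hdiff.differentiableAt (isOpen_ball.mem_nhds hw)).div
            ((differentiableAt_id.sub_const z1).pow _)
            (pow_ne_zero _ (sub_ne_zero.mpr hwz))
        exact hq.congr_of_eventuallyEq
          (eventuallyEq_of_mem (isOpen_ne.mem_nhds hwz) (fun x hx => hG1 x hx))
    have hGsph : ∀ z ∈ sphere z0 r, G z ≠ 0 ∧ z ≠ z1 := by
      intro z hz
      have hzz1 : z ≠ z1 := by
        rintro rfl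
        rw [mem_sphere] at hz
        rw [mem_ball] at hz1ball
        exact absurd hz (ne_of_lt hz1ball)
      refine ⟨?_, hzz1⟩
      rw [hG1 z hzz1]
      exact div_ne_zero (hsph z hz) (pow_ne_zero _ (sub_ne_zero.mpr hzz1))
    set d' : ℂ → ℕ := Function.update d z1 0 with hd'def
    have hfac' : ∀ z ∈ ball (0:ℂ) 1, ∃ g : ℂ → ℂ, AnalyticAt ℂ g z ∧ g z ≠ 0 ∧
        ∀ᶠ w in nhds z, G w = (w - z) ^ (d' z) * g w := by
      intro z hz
      by_cases hzz : z = z1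
      · subst hzz
        refine ⟨G, hGan1, hGz1 ▸ hg1z, ?_⟩
        simp [hd'def, Function.update_self]
      · obtain ⟨g, hga, hgz, hgev⟩ := hfac z hz
        have hzz1 : (z - z1) ≠ 0 := sub_ne_zero.mpr hzz
        refine ⟨fun w => g w / (w - z1) ^ (d z1), ?_, ?_, ?_⟩
        · exact hga.div (((analyticAt_id).sub analyticAt_const).pow _)
            (pow_ne_zero _ hzz1)
        · exact div_ne_zero hgz (pow_ne_zero _ hzz1)
        · have hev2 : ∀ᶠ w in nhds z, w ≠ z1 :=
            eventually_of_mem (isOpen_ne.mem_nhds hzz) (fun x hx => hx)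
          filter_upwards [hgev, hev2] with w hw hwz1
          rw [hG1 w hwz1, hw, hd'def, Function.update_of_ne hzz, mul_div_assoc]
    have hS' : ↑(S.erase z1) = {z | z ∈ closedBall z0 r ∧ G z = 0} := by
      ext z
      simp only [Finset.coe_erase, Set.mem_diff, Set.mem_singleton_iff, Set.mem_setOf_eq,
        Finset.mem_coe]
      constructor
      · rintro ⟨hzS, hzz1⟩
        have hz' : z ∈ closedBall z0 r ∧ h z = 0 := by
          rw [← Set.mem_setOf_eq (p := fun z => z ∈ closedBall z0 r ∧ h z = 0), ← hS]
          exact_mod_cast hzS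
        refine ⟨hz'.1, ?_⟩
        rw [hG1 z hzz1, hz'.2, zero_div]
      · rintro ⟨hzcb, hzG⟩
        have hzz1 : z ≠ z1 := by
          rintro rfl
          rw [hGz1] at hzG
          exact hg1z hzG
        have hhz : h z = 0 := by
          rw [hG1 z hzz1] at hzG
          rcases div_eq_zero_iff.mp hzG with h' | h'
          · exact h'
          · exact absurd h' (pow_ne_zero _ (sub_ne_zero.mpr hzz1))
        refine ⟨?_, hzz1⟩
        have : z ∈ ({z | z ∈ closedBall z0 r ∧ h z = 0} : Set ℂ) := ⟨hzcb, hhz⟩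
        rw [← hS] at this
        exact_mod_cast this
    -- the integrand identity on the sphere
    obtain ⟨e, he⟩ : ∃ e, d z1 = e + 1 := ⟨d z1 - 1, (Nat.succ_pred_eq_of_pos
      (Nat.pos_of_ne_zero hd1)).symm⟩
    have key : Set.EqOn (fun z => deriv h z / h z)
        (fun z => (d z1 : ℂ) / (z - z1) + deriv G z / G z) (sphere z0 r) := by
      intro z hz
      obtain ⟨hGz, hzz1⟩ := hGsph z hz
      have hzball : z ∈ ball (0:ℂ) 1 := hsub (sphere_subset_closedBall hz)
      have hGdz : DifferentiableAt ℂ G z := hGdiff.differentiableAt (isOpen_ball.mem_nhds hzball)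
      have hp : HasDerivAt (fun w => (w - z1) ^ (d z1)) ((d z1 : ℂ) * (z - z1) ^ (d z1 - 1)) z := by
        simpa [Function.comp_def] using ((hasDerivAt_pow (d z1) (z - z1)).comp z ((hasDerivAt_id z).sub_const z1))
      have hderiv : deriv h z
          = (d z1 : ℂ) * (z - z1) ^ (d z1 - 1) * G z + (z - z1) ^ (d z1) * deriv G z := by
        have hh : h = fun w => (w - z1) ^ (d z1) * G w := funext hGfac
        rw [hh, deriv_fun_mul hp.differentiableAt hGdz, hp.deriv]
      have hzne : z - z1 ≠ 0 := sub_ne_zero.mpr hzz1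
      simp only
      rw [hderiv, hGfac z, he]
      simp only [Nat.add_sub_cancel]
      field_simp
      ring
    -- integrability
    have hsphsub : sphere z0 r ⊆ ball (0:ℂ) 1 := sphere_subset_closedBall.trans hsub
    have hGanOn : AnalyticOnNhd ℂ G (ball (0:ℂ) 1) :=
      (Complex.analyticOnNhd_iff_differentiableOn isOpen_ball).mpr hGdiff
    have hint1 : CircleIntegrable (fun z => (d z1 : ℂ) / (z - z1)) z0 r := by
      apply ContinuousOn.circleIntegrable hr.le
      exact continuousOn_const.div ((continuous_id.sub continuous_const).continuousOn)
        (fun z hz => sub_ne_zero.mpr (hGsph z hz).2)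
    have hint2 : CircleIntegrable (fun z => deriv G z / G z) z0 r := by
      apply ContinuousOn.circleIntegrable hr.le
      exact ((hGanOn.deriv.continuousOn).mono hsphsub).div
        ((hGdiff.continuousOn).mono hsphsub) (fun z hz => (hGsph z hz).1)
    have hcard' : (S.erase z1).card = n := by
      rw [Finset.card_erase_of_mem h1S, hcard]
      omega
    have hih := ih (S.erase z1) G d' hcard' hGdiff hfac' (fun z hz => (hGsph z hz).1) hS'
    have hsum' : (∑ z ∈ S.erase z1, (d' z : ℂ)) = ∑ z ∈ S.erase z1, (d z : ℂ) := by
      refine Finset.sum_congr rfl (fun z hz => ?_)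
      rw [hd'def, Function.update_of_ne (Finset.mem_erase.mp hz).1]
    have hfirst : (∮ z in C(z0, r), (d z1 : ℂ) / (z - z1))
        = (d z1 : ℂ) * (2 * Real.pi * Complex.I) := by
      have hfun : (fun z => (d z1 : ℂ) / (z - z1)) = fun z => (d z1 : ℂ) • (z - z1)⁻¹ := by
        funext z
        rw [smul_eq_mul, div_eq_mul_inv]
      rw [hfun, integral_smul, integral_sub_inv_of_mem_ball hz1ball,
        smul_eq_mul]
    calc (∮ z in C(z0, r), deriv h z / h z)
        = ∮ z in C(z0, r), ((d z1 : ℂ) / (z - z1) + deriv G z / G z) :=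
          integral_congr hr.le key
      _ = (∮ z in C(z0, r), (d z1 : ℂ) / (z - z1)) + ∮ z in C(z0, r), deriv G z / G z :=
          zc_integral_add hint1 hint2
      _ = (d z1 : ℂ) * (2 * Real.pi * Complex.I)
          + 2 * Real.pi * Complex.I * (∑ z ∈ S.erase z1, (d z : ℂ)) := by
          rw [hfirst, hih, hsum']
      _ = 2 * Real.pi * Complex.I * (∑ z ∈ S, (d z : ℂ)) := by
          rw [← Finset.add_sum_erase _ _ h1S]
          ring

lemma zc_low {f : ℂ → ℂ} {F : ℕ → ℂ → ℂ}
    (hconv : TendstoLocallyUniformlyOn F f atTop (ball (0:ℂ) 1))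
    (hfc : ContinuousOn f (ball (0:ℂ) 1)) {C : Set ℂ} (hCc : IsCompact C)
    (hCs : C ⊆ ball (0:ℂ) 1) (hC : ∀ z ∈ C, f z ≠ 0) :
    ∃ δ > 0, (∀ z ∈ C, δ ≤ ‖f z‖) ∧ ∀ᶠ n in atTop, ∀ z ∈ C, δ/2 ≤ ‖F n z‖ := by
  have hu : TendstoUniformlyOn F f atTop C :=
    (tendstoLocallyUniformlyOn_iff_tendstoUniformlyOn_of_compact hCc).mp (hconv.mono hCs)
  rcases C.eq_empty_or_nonempty with hCe | hCe
  · subst hCe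
    exact ⟨1, one_pos, by simp, Eventually.of_forall (by simp)⟩
  · obtain ⟨x0, hx0, hmin⟩ := hCc.exists_isMinOn hCe
      (continuous_norm.comp_continuousOn (hfc.mono hCs))
    have hmin : ∀ z ∈ C, ‖f x0‖ ≤ ‖f z‖ := fun z hz => hmin hz
    set δ := ‖f x0‖ with hδdef
    have hδpos : 0 < δ := norm_pos_iff.mpr (hC x0 hx0)
    refine ⟨δ, hδpos, hmin, ?_⟩
    filter_upwards [Metric.tendstoUniformlyOn_iff.mp hu (δ/2) (half_pos hδpos)] with n hn z hz
    have h1 : ‖f z - F n z‖ < δ/2 := by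
      rw [← dist_eq_norm]
      exact hn z hz
    have h2 : ‖f z‖ - ‖F n z‖ ≤ ‖f z - F n z‖ := norm_sub_norm_le _ _
    have h3 : δ ≤ ‖f z‖ := hmin z hz
    linarith

lemma zc_nat_eq_of_close {a b : ℕ} (h : ‖(a:ℂ) - (b:ℂ)‖ ≤ 1/4) : a = b := by
  by_contra hne
  have h1 : ((a:ℤ)) ≠ (b:ℤ) := by exact_mod_cast hne
  have h2 : (1:ℤ) ≤ |(a:ℤ) - b| := Int.one_le_abs (sub_ne_zero.mpr h1)
  have h3 : ((a:ℂ) - b) = (((a:ℤ) - b : ℤ) : ℂ) := by push_cast; ring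
  rw [h3] at h
  have h4 : (1:ℝ) ≤ ‖(((a:ℤ) - b : ℤ) : ℂ)‖ := by
    rw [Complex.norm_intCast]
    exact_mod_cast h2
  linarith

lemma zc_count {f : ℂ → ℂ} {F : ℕ → ℂ → ℂ} {m : ℂ → ℕ} {mn : ℕ → ℂ → ℕ}
    (hf : DifferentiableOn ℂ f (ball (0:ℂ) 1))
    (hF : ∀ n, DifferentiableOn ℂ (F n) (ball (0:ℂ) 1))
    (hconv : TendstoLocallyUniformlyOn F f atTop (ball (0:ℂ) 1))
    (hm : ∀ z ∈ ball (0:ℂ) 1, ∃ g : ℂ → ℂ, AnalyticAt ℂ g z ∧ g z ≠ 0 ∧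
      ∀ᶠ w in nhds z, f w = (w - z) ^ (m z) * g w)
    (hmn : ∀ n, ∀ z ∈ ball (0:ℂ) 1, ∃ g : ℂ → ℂ, AnalyticAt ℂ g z ∧ g z ≠ 0 ∧
      ∀ᶠ w in nhds z, F n w = (w - z) ^ (mn n z) * g w)
    {z0 : ℂ} {r : ℝ} (hr : 0 < r) (hsub : closedBall z0 r ⊆ ball (0:ℂ) 1)
    (hfsph : ∀ z ∈ sphere z0 r, f z ≠ 0)
    {Sf : Finset ℂ} (hSf : ↑Sf = {z | z ∈ closedBall z0 r ∧ f z = 0}) :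
    ∀ᶠ n in atTop, ∀ t : Finset ℂ, (↑t = {z | z ∈ closedBall z0 r ∧ F n z = 0}) →
      (∑ z ∈ t, mn n z) = ∑ z ∈ Sf, m z := by
  have hsphsub : sphere z0 r ⊆ ball (0:ℂ) 1 := sphere_subset_closedBall.trans hsub
  have hsphco : IsCompact (sphere z0 r) := isCompact_sphere _ _
  have hsphne : (sphere z0 r).Nonempty := NormedSpace.sphere_nonempty.mpr hr.le
  obtain ⟨δ, hδ, hδf, hev1⟩ := zc_low hconv hf.continuousOn hsphco hsphsub hfsph
  have hfan : AnalyticOnNhd ℂ f (ball (0:ℂ) 1) :=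
    (Complex.analyticOnNhd_iff_differentiableOn isOpen_ball).mpr hf
  have hFan : ∀ n, AnalyticOnNhd ℂ (F n) (ball (0:ℂ) 1) :=
    fun n => (Complex.analyticOnNhd_iff_differentiableOn isOpen_ball).mpr (hF n)
  obtain ⟨x1, hx1, hM⟩ := hsphco.exists_isMaxOn hsphne
    (continuous_norm.comp_continuousOn (hf.continuousOn.mono hsphsub))
  obtain ⟨x2, hx2, hM'⟩ := hsphco.exists_isMaxOn hsphne
    (continuous_norm.comp_continuousOn (hfan.deriv.continuousOn.mono hsphsub))
  set M := ‖f x1‖ with hMdef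
  set M' := ‖deriv f x2‖ with hM'def
  have hMb : ∀ z ∈ sphere z0 r, ‖f z‖ ≤ M := fun z hz => hM hz
  have hM'b : ∀ z ∈ sphere z0 r, ‖deriv f z‖ ≤ M' := fun z hz => hM' hz
  have hM0 : (0:ℝ) < M + M' + 1 := by positivity
  set η := min (δ/2) (δ^2/(8*r*(M + M' + 1))) with hηdef
  have hη : 0 < η := lt_min (half_pos hδ) (by positivity)
  have hu : TendstoUniformlyOn F f atTop (sphere z0 r) :=
    (tendstoLocallyUniformlyOn_iff_tendstoUniformlyOn_of_compact hsphco).mp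
      (hconv.mono hsphsub)
  have hu' : TendstoUniformlyOn (deriv ∘ F) (deriv f) atTop (sphere z0 r) :=
    (tendstoLocallyUniformlyOn_iff_tendstoUniformlyOn_of_compact hsphco).mp
      ((hconv.deriv (Eventually.of_forall hF) isOpen_ball).mono hsphsub)
  filter_upwards [hev1, Metric.tendstoUniformlyOn_iff.mp hu η hη,
    Metric.tendstoUniformlyOn_iff.mp hu' η hη] with n h1 h2 h3
  intro t ht
  have hFnsph : ∀ z ∈ sphere z0 r, F n z ≠ 0 := fun z hz =>
    norm_pos_iff.mp (lt_of_lt_of_le (half_pos hδ) (h1 z hz))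
  have hAPf := zc_AP z0 r hr hsub Sf.card Sf f m rfl hf hm hfsph hSf
  have hAPF := zc_AP z0 r hr hsub t.card t (F n) (mn n) rfl (hF n) (hmn n) hFnsph ht
  -- pointwise bound on the sphere
  have hpt : ∀ z ∈ sphere z0 r, ‖deriv (F n) z / F n z - deriv f z / f z‖ ≤ 1/(4*r) := by
    intro z hz
    have hbδ : δ ≤ ‖f z‖ := hδf z hz
    have haδ : δ/2 ≤ ‖F n z‖ := h1 z hz
    have hb0 : f z ≠ 0 := hfsph z hz
    have ha0 : F n z ≠ 0 := hFnsph z hz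
    have hd1 : ‖deriv (F n) z - deriv f z‖ ≤ η := by
      have := h3 z hz
      rw [dist_comm, dist_eq_norm] at this
      exact this.le
    have hd2 : ‖f z - F n z‖ ≤ η := by
      have := h2 z hz
      rw [dist_eq_norm] at this
      exact this.le
    rw [div_sub_div _ _ ha0 hb0]
    have hnum : ‖deriv (F n) z * f z - F n z * deriv f z‖ ≤ η*M + M'*η := by
      have hrw : deriv (F n) z * f z - F n z * deriv f z
          = (deriv (F n) z - deriv f z) * f z + deriv f z * (f z - F n z) := by ring
      rw [hrw]
      calc ‖(deriv (F n) z - deriv f z) * f z + deriv f z * (f z - F n z)‖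
          ≤ ‖(deriv (F n) z - deriv f z) * f z‖ + ‖deriv f z * (f z - F n z)‖ := norm_add_le _ _
        _ = ‖deriv (F n) z - deriv f z‖ * ‖f z‖ + ‖deriv f z‖ * ‖f z - F n z‖ := by
            rw [norm_mul, norm_mul]
        _ ≤ η * M + M' * η :=
            add_le_add (mul_le_mul hd1 (hMb z hz) (norm_nonneg _) hη.le)
              (mul_le_mul (hM'b z hz) hd2 (norm_nonneg _) (norm_nonneg _))
    have hden : δ^2/2 ≤ ‖F n z * f z‖ := by
      rw [norm_mul]
      calc δ^2/2 = (δ/2) * δ := by ring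
        _ ≤ ‖F n z‖ * ‖f z‖ := mul_le_mul haδ hbδ hδ.le (norm_nonneg _)
    calc ‖(deriv (F n) z * f z - F n z * deriv f z) / (F n z * f z)‖
        = ‖deriv (F n) z * f z - F n z * deriv f z‖ / ‖F n z * f z‖ := norm_div _ _
      _ ≤ (η*M + M'*η) / (δ^2/2) := by
          apply div_le_div₀ (by positivity) hnum (by positivity) hden
      _ ≤ 1/(4*r) := by
          have hη2 : η ≤ δ^2/(8*r*(M+M'+1)) := min_le_right _ _
          have hkey : η*(8*r*(M+M'+1)) ≤ δ^2 := by
            rw [← le_div_iff₀ (by positivity)]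
            exact hη2
          rw [div_le_div_iff₀ (by positivity) (by positivity)]
          have hMn : (0:ℝ) ≤ M := norm_nonneg _
          have hM'n : (0:ℝ) ≤ M' := norm_nonneg _
          nlinarith [hη.le, hr.le, mul_nonneg hr.le hη.le]
  -- integrability
  have hintf : CircleIntegrable (fun z => deriv f z / f z) z0 r :=
    ContinuousOn.circleIntegrable hr.le (((hfan.deriv.continuousOn).mono hsphsub).div
      ((hf.continuousOn).mono hsphsub) hfsph)
  have hintF : CircleIntegrable (fun z => deriv (F n) z / F n z) z0 r :=
    ContinuousOn.circleIntegrable hr.le ((((hFan n).deriv.continuousOn).mono hsphsub).div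
      (((hF n).continuousOn).mono hsphsub) hFnsph)
  have hsubint : (∮ z in C(z0,r), (deriv (F n) z / F n z - deriv f z / f z))
      = (∮ z in C(z0,r), deriv (F n) z / F n z) - ∮ z in C(z0,r), deriv f z / f z :=
    integral_sub hintF hintf
  have hbnd : ‖(∮ z in C(z0,r), (deriv (F n) z / F n z - deriv f z / f z))‖
      ≤ 2 * Real.pi * r * (1/(4*r)) := norm_integral_le_of_norm_le_const hr.le hpt
  have heqπ : 2 * Real.pi * r * (1/(4*r)) = Real.pi/2 := by
    field_simp
    ring
  have hval : (2*Real.pi*Complex.I : ℂ) * (((∑ z ∈ t, mn n z : ℕ) : ℂ) - ((∑ z ∈ Sf, m z : ℕ) : ℂ))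
      = ∮ z in C(z0,r), (deriv (F n) z / F n z - deriv f z / f z) := by
    rw [Nat.cast_sum, Nat.cast_sum, mul_sub, ← hAPF, ← hAPf, ← hsubint]
  have hsmall : ‖(((∑ z ∈ t, mn n z : ℕ) : ℂ) - ((∑ z ∈ Sf, m z : ℕ) : ℂ))‖ ≤ 1/4 := by
    have h5 : ‖(2*Real.pi*Complex.I : ℂ) * (((∑ z ∈ t, mn n z : ℕ) : ℂ)
        - ((∑ z ∈ Sf, m z : ℕ) : ℂ))‖ ≤ Real.pi/2 := by
      rw [hval]
      exact hbnd.trans (le_of_eq heqπ)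
    rw [norm_mul] at h5
    have h6 : ‖(2*Real.pi*Complex.I : ℂ)‖ = 2*Real.pi := by
      simp [norm_mul, Real.pi_nonneg, abs_of_nonneg]
    rw [h6] at h5
    nlinarith [Real.pi_pos,
      norm_nonneg ((((∑ z ∈ t, mn n z : ℕ) : ℂ) - ((∑ z ∈ Sf, m z : ℕ) : ℂ)))]
  exact zc_nat_eq_of_close hsmall

lemma zc_sep (Z : Finset ℂ) : ∃ s > 0, ∀ z ∈ Z, ∀ z' ∈ Z, z ≠ z' → s ≤ dist z z' := by
  classical
  have key : ∀ (P : Finset (ℂ × ℂ)), (∀ p ∈ P, p.1 ≠ p.2) →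
      ∃ s > 0, ∀ p ∈ P, s ≤ dist p.1 p.2 := by
    intro P
    induction P using Finset.induction with
    | empty => exact fun _ => ⟨1, one_pos, by simp⟩
    | @insert q Q hq ih =>
      intro hne
      obtain ⟨s, hs, hsle⟩ := ih (fun p hp => hne p (Finset.mem_insert_of_mem hp))
      have hqne : q.1 ≠ q.2 := hne q (Finset.mem_insert_self _ _)
      refine ⟨min s (dist q.1 q.2), lt_min hs (dist_pos.mpr hqne), ?_⟩
      intro p hp
      rcases Finset.mem_insert.mp hp with rfl | hp
      · exact min_le_right _ _
      · exact le_trans (min_le_left _ _) (hsle p hp)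
  obtain ⟨s, hs, hsle⟩ := key ((Z ×ˢ Z).filter (fun p => p.1 ≠ p.2))
    (fun p hp => (Finset.mem_filter.mp hp).2)
  exact ⟨s, hs, fun z hz z' hz' hne =>
    hsle (z, z') (Finset.mem_filter.mpr ⟨Finset.mem_product.mpr ⟨hz, hz'⟩, hne⟩)⟩

end ZCHelpers

section Main
open Set

/-- Continuity of the zero-counting measure: if `F n → f` locally uniformly on the unit disk,
`f` holomorphic and not identically zero, and `m`, `mn n` record the orders of vanishing of
`f`, `F n` at each point of the disk, then for every continuous compactly supported `φ`
(with support in the disk) the sums of `φ` over zeros with multiplicity converge. -/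
theorem stmt11 (f : ℂ → ℂ) (F : ℕ → ℂ → ℂ)
    (hf : DifferentiableOn ℂ f (ball (0 : ℂ) 1))
    (hF : ∀ n, DifferentiableOn ℂ (F n) (ball (0 : ℂ) 1))
    (hconv : TendstoLocallyUniformlyOn F f atTop (ball (0 : ℂ) 1))
    (hf0 : ∃ z ∈ ball (0 : ℂ) 1, f z ≠ 0)
    (m : ℂ → ℕ) (mn : ℕ → ℂ → ℕ)
    (hm : ∀ z ∈ ball (0 : ℂ) 1, ∃ g : ℂ → ℂ, AnalyticAt ℂ g z ∧ g z ≠ 0 ∧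
      ∀ᶠ w in nhds z, f w = (w - z) ^ (m z) * g w)
    (hmn : ∀ n, ∀ z ∈ ball (0 : ℂ) 1, ∃ g : ℂ → ℂ, AnalyticAt ℂ g z ∧ g z ≠ 0 ∧
      ∀ᶠ w in nhds z, F n w = (w - z) ^ (mn n z) * g w)
    (φ : ℂ → ℂ) (hφ : Continuous φ) (hφc : HasCompactSupport φ)
    (hφs : tsupport φ ⊆ ball (0 : ℂ) 1) :
    Tendsto (fun n => ∑ᶠ z ∈ ball (0 : ℂ) 1, (mn n z : ℂ) * φ z) atTop
      (nhds (∑ᶠ z ∈ ball (0 : ℂ) 1, (m z : ℂ) * φ z)) := by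
  classical
  have hfloc : ∀ z ∈ ball (0:ℂ) 1,
      (∀ᶠ w in nhdsWithin z {z}ᶜ, f w ≠ 0) ∧ (f z = 0 ↔ m z ≠ 0) := by
    intro z hz
    obtain ⟨g, hga, hgz, hev⟩ := hm z hz
    exact zc_loc hga hgz hev
  have hFloc : ∀ n, ∀ z ∈ ball (0:ℂ) 1,
      (∀ᶠ w in nhdsWithin z {z}ᶜ, F n w ≠ 0) ∧ (F n z = 0 ↔ mn n z ≠ 0) := by
    intro n z hz
    obtain ⟨g, hga, hgz, hev⟩ := hmn n z hz
    exact zc_loc hga hgz hev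
  have hKc : IsCompact (tsupport φ) := hφc
  have hZfin : {z | z ∈ tsupport φ ∧ f z = 0}.Finite :=
    zc_finite (fun z hz => (hfloc z (hφs hz)).1) hKc
  set Zf := hZfin.toFinset with hZfdef
  have hZf : ∀ z, z ∈ Zf ↔ z ∈ tsupport φ ∧ f z = 0 := by
    intro z
    rw [hZfdef, Set.Finite.mem_toFinset]
    rfl
  -- rewrite the target sum
  have htarget : ∑ᶠ z ∈ ball (0:ℂ) 1, (m z : ℂ) * φ z = ∑ z ∈ Zf, (m z : ℂ) * φ z := by
    apply finsum_mem_eq_sum_of_subset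
    · rintro z ⟨hzb, hzs⟩
      rw [Function.mem_support] at hzs
      have hφz : φ z ≠ 0 := fun h0 => hzs (by rw [h0, mul_zero])
      have hmz : m z ≠ 0 := fun h0 => hzs (by rw [h0]; simp)
      exact (hZf z).mpr ⟨subset_tsupport φ hφz, (hfloc z hzb).2.mpr hmz⟩
    · intro z hz
      exact hφs ((hZf z).mp (by exact_mod_cast hz)).1
  rw [htarget]
  rw [Metric.tendsto_nhds]
  intro ε hε
  set Mt := ∑ z ∈ Zf, m z with hMtdef
  set ε' := ε / (2*(Mt+1)) with hε'def
  have hε' : 0 < ε' := by positivity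
  -- choice of radii
  have hradii : ∀ z ∈ Zf, ∃ ρ > 0, closedBall z ρ ⊆ ball (0:ℂ) 1 ∧
      (∀ w ∈ closedBall z ρ, w ≠ z → f w ≠ 0) ∧
      (∀ w ∈ closedBall z ρ, ‖φ w - φ z‖ ≤ ε') := by
    intro z hz
    have hzU : z ∈ ball (0:ℂ) 1 := hφs ((hZf z).mp hz).1
    have h1 : ∀ᶠ w in nhds z, w ∈ ball (0:ℂ) 1 := isOpen_ball.eventually_mem hzU
    have h2 : ∀ᶠ w in nhds z, w ≠ z → f w ≠ 0 := by
      have := (hfloc z hzU).1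
      rwa [eventually_nhdsWithin_iff] at this
    have h3 : ∀ᶠ w in nhds z, ‖φ w - φ z‖ ≤ ε' := by
      have hc : Tendsto φ (nhds z) (nhds (φ z)) := hφ.continuousAt
      filter_upwards [hc (Metric.ball_mem_nhds (φ z) hε')] with w hw
      simp only [Set.mem_preimage, mem_ball, dist_eq_norm] at hw
      exact hw.le
    obtain ⟨ρ, hρ, hball⟩ := Metric.nhds_basis_closedBall.eventually_iff.mp
      ((h1.and (h2.and h3)))
    exact ⟨ρ, hρ, fun w hw => (hball hw).1, fun w hw hwz => (hball hw).2.1 hwz,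
      fun w hw => (hball hw).2.2⟩
  choose! ρ hρpos hρsub hρz hρφ using hradii
  obtain ⟨s, hs, hssep⟩ := zc_sep Zf
  -- global radius r
  obtain ⟨r, hr, hrs, hrρ⟩ : ∃ r > 0, (r ≤ s/3) ∧ ∀ z ∈ Zf, r ≤ ρ z := by
    rcases Zf.eq_empty_or_nonempty with hZe | hZne
    · exact ⟨s/3, by positivity, le_refl _, by simp [hZe]⟩
    · refine ⟨min (s/3) (Zf.inf' hZne ρ), ?_, min_le_left _ _, ?_⟩
      · apply lt_min (by positivity)
        rw [Finset.lt_inf'_iff]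
        exact fun z hz => hρpos z hz
      · intro z hz
        exact le_trans (min_le_right _ _) (Finset.inf'_le _ hz)
  have hcbsub : ∀ z ∈ Zf, closedBall z r ⊆ ball (0:ℂ) 1 :=
    fun z hz => (closedBall_subset_closedBall (hrρ z hz)).trans (hρsub z hz)
  have hdisj : ∀ z ∈ Zf, ∀ z' ∈ Zf, z ≠ z' →
      Disjoint (closedBall z r) (closedBall z' r) := by
    intro z hz z' hz' hne
    rw [Set.disjoint_left]
    intro w hw hw'
    have h1 : dist z z' ≤ dist z w + dist w z' := dist_triangle _ _ _
    rw [mem_closedBall] at hw hw'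
    rw [dist_comm z w] at h1
    have h2 : s ≤ dist z z' := hssep z hz z' hz' hne
    have : s ≤ 2*r := by linarith
    linarith
  -- eventual counting near each zero
  have hcount : ∀ z ∈ Zf, ∀ᶠ n in atTop, ∀ t : Finset ℂ,
      (↑t = {w | w ∈ closedBall z r ∧ F n w = 0}) → (∑ w ∈ t, mn n w) = m z := by
    intro z hz
    have hz0 : f z = 0 := ((hZf z).mp hz).2
    have hfz : ∀ w ∈ closedBall z r, w ≠ z → f w ≠ 0 := fun w hw hwz =>
      hρz z hz w (closedBall_subset_closedBall (hrρ z hz) hw) hwz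
    have hfsph : ∀ w ∈ sphere z r, f w ≠ 0 := by
      intro w hw
      have hwz : w ≠ z := by
        intro h
        rw [h, mem_sphere, dist_self] at hw
        exact hr.ne' hw.symm
      exact hfz w (sphere_subset_closedBall hw) hwz
    have hSf : ↑({z} : Finset ℂ) = {w | w ∈ closedBall z r ∧ f w = 0} := by
      ext w
      simp only [Finset.coe_singleton, Set.mem_singleton_iff, Set.mem_setOf_eq]
      constructor
      · rintro rfl
        exact ⟨mem_closedBall_self hr.le, hz0⟩
      · rintro ⟨hw1, hw2⟩
        by_contra hne
        exact hfz w hw1 hne hw2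
    have := zc_count hf hF hconv hm hmn hr (hcbsub z hz) hfsph hSf
    simpa using this
  have hcountall : ∀ᶠ n in atTop, ∀ z ∈ Zf, ∀ t : Finset ℂ,
      (↑t = {w | w ∈ closedBall z r ∧ F n w = 0}) → (∑ w ∈ t, mn n w) = m z :=
    (Filter.eventually_all_finset Zf).mpr hcount
  -- eventually no zeros away from the Zf-balls
  have hCc : IsCompact (tsupport φ \ ⋃ z ∈ Zf, ball z r) :=
    hKc.diff (isOpen_biUnion (fun z _ => isOpen_ball))
  have hCsub : (tsupport φ \ ⋃ z ∈ Zf, ball z r) ⊆ ball (0:ℂ) 1 := fun w hw => hφs hw.1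
  have hCf : ∀ w ∈ tsupport φ \ ⋃ z ∈ Zf, ball z r, f w ≠ 0 := by
    rintro w ⟨hwK, hwn⟩ hw0
    have hwZ : w ∈ Zf := (hZf w).mpr ⟨hwK, hw0⟩
    exact hwn (Set.mem_biUnion hwZ (mem_ball_self hr))
  obtain ⟨δC, hδC, -, hevC⟩ := zc_low hconv hf.continuousOn hCc hCsub hCf
  have hevC' : ∀ᶠ n in atTop, ∀ w ∈ tsupport φ \ ⋃ z ∈ Zf, ball z r, F n w ≠ 0 :=
    hevC.mono (fun n hn w hw =>
      norm_pos_iff.mp (lt_of_lt_of_le (half_pos hδC) (hn w hw)))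
  -- finiteness of zero sets of the F n
  have hFfin : ∀ n, ∀ z ∈ Zf, {w | w ∈ closedBall z r ∧ F n w = 0}.Finite := by
    intro n z hz
    exact zc_finite (fun w hw => (hFloc n w (hcbsub z hz hw)).1) (isCompact_closedBall z r)
  have hAfin : ∀ n, {w | w ∈ tsupport φ ∧ F n w = 0}.Finite := fun n =>
    zc_finite (fun w hw => (hFloc n w (hφs hw)).1) hKc
  -- the final estimate
  filter_upwards [hcountall, hevC'] with n hcnt hC0
  set A := (hAfin n).toFinset with hAdef
  have hAmem : ∀ w, w ∈ A ↔ w ∈ tsupport φ ∧ F n w = 0 := by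
    intro w
    rw [hAdef, Set.Finite.mem_toFinset]
    rfl
  have hdisjF : (↑Zf : Set ℂ).PairwiseDisjoint
      (fun z => A.filter (fun w => w ∈ closedBall z r)) := by
    intro z hz z' hz' hne
    apply Finset.disjoint_left.mpr
    intro w hw hw'
    have h1 := (Finset.mem_filter.mp hw).2
    have h2 := (Finset.mem_filter.mp hw').2
    exact Set.disjoint_left.mp (hdisj z (Finset.mem_coe.mp hz) z' (Finset.mem_coe.mp hz') hne)
      h1 h2
  have hAB : A = Zf.biUnion (fun z => A.filter (fun w => w ∈ closedBall z r)) := by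
    ext w
    constructor
    · intro hwA
      obtain ⟨hwK, hw0⟩ := (hAmem w).mp hwA
      have hwU : w ∈ ⋃ z ∈ Zf, ball z r := by
        by_contra hnx
        exact hC0 w ⟨hwK, hnx⟩ hw0
      obtain ⟨z, hzZf, hwz⟩ := Set.mem_iUnion₂.mp hwU
      exact Finset.mem_biUnion.mpr ⟨z, hzZf,
        Finset.mem_filter.mpr ⟨hwA, ball_subset_closedBall hwz⟩⟩
    · intro hwB
      obtain ⟨z, hz, hfw⟩ := Finset.mem_biUnion.mp hwB
      exact (Finset.mem_filter.mp hfw).1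
  have hLHS : ∑ᶠ w ∈ ball (0:ℂ) 1, (mn n w : ℂ) * φ w
      = ∑ z ∈ Zf, ∑ w ∈ A.filter (fun w => w ∈ closedBall z r), (mn n w : ℂ) * φ w := by
    have h1 : ∑ᶠ w ∈ ball (0:ℂ) 1, (mn n w : ℂ) * φ w
        = ∑ w ∈ A, (mn n w : ℂ) * φ w := by
      apply finsum_mem_eq_sum_of_subset
      · rintro w ⟨hwb, hws⟩
        rw [Function.mem_support] at hws
        have hφw : φ w ≠ 0 := fun h0 => hws (by rw [h0, mul_zero])
        have hmw : mn n w ≠ 0 := fun h0 => hws (by rw [h0]; simp)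
        exact (hAmem w).mpr ⟨subset_tsupport φ hφw, (hFloc n w hwb).2.mpr hmw⟩
      · intro w hw
        exact hφs ((hAmem w).mp (by exact_mod_cast hw)).1
    rw [h1]
    conv_lhs => rw [hAB]
    exact Finset.sum_biUnion hdisjF
  have hper : ∀ z ∈ Zf,
      ‖(∑ w ∈ A.filter (fun w => w ∈ closedBall z r), (mn n w : ℂ) * φ w)
        - (m z : ℂ) * φ z‖ ≤ (m z : ℝ) * ε' := by
    intro z hz
    set t := (hFfin n z hz).toFinset with htdef
    have ht : ↑t = {w | w ∈ closedBall z r ∧ F n w = 0} := Set.Finite.coe_toFinset _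
    have htmem : ∀ w, w ∈ t ↔ w ∈ closedBall z r ∧ F n w = 0 := fun w => by
      rw [htdef, Set.Finite.mem_toFinset]
      rfl
    have hsum_t : ∑ w ∈ t, mn n w = m z := hcnt z hz t ht
    have hsubset : A.filter (fun w => w ∈ closedBall z r) ⊆ t := by
      intro w hw
      obtain ⟨hwA, hwcb⟩ := Finset.mem_filter.mp hw
      exact (htmem w).mpr ⟨hwcb, ((hAmem w).mp hwA).2⟩
    have hsum_eq : ∑ w ∈ A.filter (fun w => w ∈ closedBall z r), (mn n w : ℂ) * φ w
        = ∑ w ∈ t, (mn n w : ℂ) * φ w := by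
      apply Finset.sum_subset hsubset
      intro w hwt hwn
      have hw' := (htmem w).mp hwt
      have hφw : φ w = 0 := by
        by_contra hφw
        have hwK : w ∈ tsupport φ := subset_tsupport φ hφw
        exact hwn (Finset.mem_filter.mpr ⟨(hAmem w).mpr ⟨hwK, hw'.2⟩, hw'.1⟩)
      rw [hφw, mul_zero]
    have hmz : (m z : ℂ) * φ z = ∑ w ∈ t, (mn n w : ℂ) * φ z := by
      rw [← hsum_t, Nat.cast_sum, Finset.sum_mul]
    rw [hsum_eq, hmz, ← Finset.sum_sub_distrib]
    calc ‖∑ w ∈ t, ((mn n w : ℂ) * φ w - (mn n w : ℂ) * φ z)‖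
        ≤ ∑ w ∈ t, ‖(mn n w : ℂ) * φ w - (mn n w : ℂ) * φ z‖ := norm_sum_le _ _
      _ ≤ ∑ w ∈ t, (mn n w : ℝ) * ε' := by
          apply Finset.sum_le_sum
          intro w hw
          rw [← mul_sub, norm_mul, Complex.norm_natCast]
          apply mul_le_mul_of_nonneg_left _ (Nat.cast_nonneg _)
          exact hρφ z hz w (closedBall_subset_closedBall (hrρ z hz) ((htmem w).mp hw).1)
      _ = (m z : ℝ) * ε' := by
          rw [← Finset.sum_mul, ← Nat.cast_sum, hsum_t]
  rw [dist_eq_norm, hLHS, ← Finset.sum_sub_distrib]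
  calc ‖∑ z ∈ Zf, ((∑ w ∈ A.filter (fun w => w ∈ closedBall z r), (mn n w : ℂ) * φ w)
        - (m z : ℂ) * φ z)‖
      ≤ ∑ z ∈ Zf, ‖(∑ w ∈ A.filter (fun w => w ∈ closedBall z r), (mn n w : ℂ) * φ w)
        - (m z : ℂ) * φ z‖ := norm_sum_le _ _
    _ ≤ ∑ z ∈ Zf, (m z : ℝ) * ε' := Finset.sum_le_sum (fun z hz => hper z hz)
    _ = (Mt : ℝ) * ε' := by
        rw [← Finset.sum_mul, ← Nat.cast_sum]
    _ < ε := by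
        have hx : (0:ℝ) ≤ (Mt:ℝ) := Nat.cast_nonneg _
        have hD : (0:ℝ) < 2*((Mt:ℝ)+1) := by positivity
        rw [hε'def, hε'def] at *
        rw [show ((Mt:ℝ)) * (ε / (2*((Mt:ℝ)+1))) = (Mt:ℝ) * ε / (2*((Mt:ℝ)+1)) by ring,
          div_lt_iff₀ hD]
        nlinarith

end Main
end

section
/- Let a' ∈ ℂ be nonzero and q ∈ (0,1) satisfy |a'| − q²(2−q)/(1−q)² > 0. Let {c_k}_{k≥1} be deterministic complex numbers with |c_k| ≤ k for all k ≥ 2 and |c₁| < r, where r := |a'|/q − q(2−q)/(1−q)². Then the function φ(z) = a' − Σ_{k≥1} c_k z^k has no zeros in the closed disk of radius q: indeed, by Rouché's theorem φ has the same number of zeros in D(0,q) as g(z) = a' − c₁ z, which is zero. -/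
open Metric

/-! Only the first coefficient can be large, so on `‖z‖ ≤ q` the triangle inequality gives
`‖∑ c_k z^k‖ ≤ ‖c₁‖ q + ∑_{k≥2} k q^k = ‖c₁‖ q + q²(2−q)/(1−q)²`, and the hypothesis
`‖c₁‖ < r` says precisely that this is less than `‖a'‖`. -/

lemma hasSum_coe_add_two_mul_geometric {q : ℝ} (hq : ‖q‖ < 1) :
    HasSum (fun n : ℕ => ((n : ℝ) + 2) * q ^ (n + 2)) (q / (1 - q) ^ 2 - q) := by
  have h := (hasSum_nat_add_iff' (f := fun n : ℕ => (n : ℝ) * q ^ n) 2).mpr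
    (hasSum_coe_mul_geometric_of_norm_lt_one hq)
  simp only [Finset.sum_range_succ, Finset.sum_range_zero, Nat.cast_add, Nat.cast_ofNat,
    Nat.cast_zero, Nat.cast_one, zero_mul, one_mul, pow_one, zero_add] at h
  exact h

section PowerSeries

variable {𝕜 : Type*} [NormedField 𝕜] {c : ℕ → 𝕜} {z : 𝕜} {q : ℝ}

lemma norm_coeff_mul_pow_add_two_le (hz : ‖z‖ ≤ q) (hc : ∀ k : ℕ, 2 ≤ k → ‖c k‖ ≤ k) (k : ℕ) :
    ‖c (k + 2) * z ^ (k + 2)‖ ≤ ((k : ℝ) + 2) * q ^ (k + 2) := by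
  rw [norm_mul, norm_pow]
  have hck : ‖c (k + 2)‖ ≤ (k : ℝ) + 2 := by exact_mod_cast hc (k + 2) le_add_self
  gcongr

lemma norm_tsum_coeff_mul_pow_succ_le [CompleteSpace 𝕜] (hz : ‖z‖ ≤ q) (hq : q < 1)
    (hc : ∀ k : ℕ, 2 ≤ k → ‖c k‖ ≤ k) :
    ‖∑' k : ℕ, c (k + 1) * z ^ (k + 1)‖ ≤ ‖c 1‖ * q + (q / (1 - q) ^ 2 - q) := by
  have hq0 : 0 ≤ q := (norm_nonneg z).trans hz
  have hgeom := hasSum_coe_add_two_mul_geometric (by rwa [Real.norm_of_nonneg hq0])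
  have htail := norm_coeff_mul_pow_add_two_le hz hc
  have hsum : Summable fun k : ℕ => c (k + 1) * z ^ (k + 1) :=
    (summable_nat_add_iff 1).mp (hgeom.summable.of_norm_bounded htail)
  rw [hsum.tsum_eq_zero_add]
  calc ‖c (0 + 1) * z ^ (0 + 1) + ∑' k : ℕ, c (k + 1 + 1) * z ^ (k + 1 + 1)‖
      ≤ ‖c 1 * z‖ + ‖∑' k : ℕ, c (k + 2) * z ^ (k + 2)‖ := by
        simpa using norm_add_le (c 1 * z) (∑' k : ℕ, c (k + 2) * z ^ (k + 2))
    _ ≤ ‖c 1‖ * q + (q / (1 - q) ^ 2 - q) := by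
      gcongr
      · rw [norm_mul]; gcongr
      · exact tsum_of_norm_bounded hgeom htail

end PowerSeries

theorem stmt13_general (a' : ℂ) (q : ℝ) (hq0 : 0 < q) (hq1 : q < 1)
    (c : ℕ → ℂ) (hck : ∀ k : ℕ, 2 ≤ k → ‖c k‖ ≤ k)
    (r : ℝ) (hr : r = ‖a'‖ / q - q * (2 - q) / (1 - q) ^ 2)
    (hc1 : ‖c 1‖ < r) :
    ∀ z ∈ closedBall (0 : ℂ) q,
      a' - ∑' k : ℕ, c (k + 1) * z ^ (k + 1) ≠ 0 := by
  intro z hz hzero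
  have hbound := norm_tsum_coeff_mul_pow_succ_le (mem_closedBall_zero_iff.mp hz) hq1 hck
  have hlt : ‖c 1‖ * q + (q / (1 - q) ^ 2 - q) < ‖a'‖ := by
    have h1q : 1 - q ≠ 0 := by linarith
    have hrq : r * q = ‖a'‖ - q * (q * (2 - q) / (1 - q) ^ 2) := by
      rw [hr]; field_simp
    have htail : q / (1 - q) ^ 2 - q = q * (q * (2 - q) / (1 - q) ^ 2) := by
      field_simp; ring
    linarith [mul_lt_mul_of_pos_right hc1 hq0]
  rw [← sub_eq_zero.mp hzero] at hbound
  linarith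

/-- If `|a'| − q²(2−q)/(1−q)² > 0`, `|c_k| ≤ k` for `k ≥ 2` and `|c₁| < r` with
`r = |a'|/q − q(2−q)/(1−q)²`, then `φ(z) = a' − Σ_{k≥1} c_k z^k` has no zeros in the
closed disk of radius `q`. -/
theorem stmt13 (a' : ℂ) (ha' : a' ≠ 0) (q : ℝ) (hq0 : 0 < q) (hq1 : q < 1)
    (hqa : 0 < ‖a'‖ - q ^ 2 * (2 - q) / (1 - q) ^ 2)
    (c : ℕ → ℂ) (hck : ∀ k : ℕ, 2 ≤ k → ‖c k‖ ≤ k)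
    (r : ℝ) (hr : r = ‖a'‖ / q - q * (2 - q) / (1 - q) ^ 2)
    (hc1 : ‖c 1‖ < r) :
    ∀ z ∈ closedBall (0 : ℂ) q,
      a' - ∑' k : ℕ, c (k + 1) * z ^ (k + 1) ≠ 0 :=
  stmt13_general a' q hq0 hq1 c hck r hr hc1
end
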